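/- Let R be a commutative ring, N ⊆ R a nilpotent ideal, and f ∈ R such that for every i ≥ 0 and every x ∈ N^i, if f·x ∈ N^{i+1} then x ∈ N^{i+1} (f acts injectively on each graded piece N^i/N^{i+1}; here N⁰ = R). Let S be the localization of R away from f, and inside S define the R-submodules A = Σ_{k≥0} N^{2k}·f^{−k} and I = Σ_{k≥0} N^{2k+1}·f^{−k}. Then I ⊆ A, and the assignment sending (the class of) a₀ + a₂·f^{−1} + a₄·f^{−2} + ⋯ (with a_{2k} ∈ N^{2k}) to (a₀ mod N, (a_{2k} mod (N^{2k+1} + f·N^{2k}))_{k≥1}) is a well-defined isomorphism of R-modules A/I ≅ (R/N) ⊕ ⊕_{k≥1} N^{2k}/(N^{2k+1} + f·N^{2k}). -/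

import Mathlib

open DirectSum

/-- The `R`-submodule `Σ_{k≥0} N^{2k}·f^{−k}` of the localization `R[1/f]`: the `R`-span of
all `s` with `s·f^k = x` for some `k` and some `x ∈ N^{2k}`. -/
abbrev AD {R : Type*} [CommRing R] (N : Ideal R) (f : R) :
    Submodule R (Localization.Away f) :=
  Submodule.span R {s : Localization.Away f | ∃ (k : ℕ) (x : R), x ∈ N ^ (2 * k) ∧
    s * (algebraMap R (Localization.Away f) f) ^ k = algebraMap R (Localization.Away f) x}

/-- The `R`-submodule `Σ_{k≥0} N^{2k+1}·f^{−k}` of the localization `R[1/f]`. -/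
abbrev ID {R : Type*} [CommRing R] (N : Ideal R) (f : R) :
    Submodule R (Localization.Away f) :=
  Submodule.span R {s : Localization.Away f | ∃ (k : ℕ) (x : R), x ∈ N ^ (2 * k + 1) ∧
    s * (algebraMap R (Localization.Away f) f) ^ k = algebraMap R (Localization.Away f) x}

/-- The graded piece `N^{2k} / (N^{2k+1} + f·N^{2k})`. -/
abbrev gradedPiece {R : Type*} [CommRing R] (N : Ideal R) (f : R) (k : ℕ) :=
  ↥(N ^ (2 * k) : Ideal R) ⧸
    (Submodule.comap (N ^ (2 * k) : Ideal R).subtype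
      ((N ^ (2 * k + 1) : Ideal R) ⊔ Ideal.span {f} * N ^ (2 * k)))

/-!
Write elements of `A` as `Σ aₖ f⁻ᵏ` with `aₖ ∈ N^{2k}`. The map from the graded side to `A/I`
is evidently well defined and surjective; the content is injectivity. If `Σ aₖ f⁻ᵏ ∈ I`,
subtracting a representation `Σ cₖ f⁻ᵏ` with `cₖ ∈ N^{2k+1}` gives `Σ zₖ f⁻ᵏ = 0` with
`zₖ ∈ N^{2k}`. Clearing denominators, `fᵗ T_M = 0` in `R` for the Horner sums
`T_j = Σ_{k ≤ j} f^{j-k} zₖ`, hence `T_M ∈ N^{2M+2}` since `f` is regular on the associated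
graded ring. The recursion `T_{j+1} = f T_j + z_{j+1}` and regularity give `T_j ∈ N^{2j+2}` by
downward induction, whence `z₀ = T₀ ∈ N` and `z_{j+1} = T_{j+1} - f T_j ∈ N^{2j+3} + f N^{2j+2}`.
-/

open Finset IsLocalization.Away

section Graded

variable {R : Type*} [CommRing R]

def IsGradedRegular (N : Ideal R) (f : R) : Prop :=
  ∀ (i : ℕ) (x : R), x ∈ N ^ i → f * x ∈ N ^ (i + 1) → x ∈ N ^ (i + 1)

abbrev gradedDenom (N : Ideal R) (f : R) (k : ℕ) : Ideal R :=
  N ^ (2 * k + 1) ⊔ Ideal.span {f} * N ^ (2 * k)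

variable {N : Ideal R} {f : R}

theorem IsGradedRegular.mem_pow_of_mul_mem (hreg : IsGradedRegular N f) :
    ∀ {j : ℕ} {x : R}, f * x ∈ N ^ j → x ∈ N ^ j
  | 0, _, _ => by simp
  | j + 1, _, h => hreg j _ (hreg.mem_pow_of_mul_mem (Ideal.pow_le_pow_right j.le_succ h)) h

theorem IsGradedRegular.mem_pow_of_pow_mul_mem (hreg : IsGradedRegular N f) {j : ℕ} {x : R} :
    ∀ t : ℕ, f ^ t * x ∈ N ^ j → x ∈ N ^ j
  | 0, h => by simpa using h
  | t + 1, h => hreg.mem_pow_of_pow_mul_mem t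
      (hreg.mem_pow_of_mul_mem (by rwa [← mul_assoc, ← pow_succ']))

theorem sum_range_succ_pow_sub_mul (f : R) (z : ℕ → R) (M : ℕ) :
    ∑ k ∈ range (M + 2), f ^ (M + 1 - k) * z k =
      f * ∑ k ∈ range (M + 1), f ^ (M - k) * z k + z (M + 1) := by
  rw [sum_range_succ, Nat.sub_self, pow_zero, one_mul, mul_sum]
  congr 1
  refine sum_congr rfl fun k hk => ?_
  rw [Nat.sub_add_comm (Nat.lt_succ_iff.mp (mem_range.mp hk)), pow_succ']
  ring

theorem IsGradedRegular.coeff_mem_of_sum_pow_sub_mul_mem (hreg : IsGradedRegular N f)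
    {z : ℕ → R} (hz : ∀ k, z k ∈ N ^ (2 * k)) :
    ∀ M : ℕ, ∑ k ∈ range (M + 1), f ^ (M - k) * z k ∈ N ^ (2 * (M + 1)) →
      z 0 ∈ N ∧ ∀ k < M, z (k + 1) ∈ gradedDenom N f (k + 1)
  | 0, h =>
    ⟨Ideal.pow_le_self two_ne_zero (by simpa using h), fun k hk => absurd hk (Nat.not_lt_zero k)⟩
  | M + 1, h => by
    rw [sum_range_succ_pow_sub_mul] at h
    set T := ∑ k ∈ range (M + 1), f ^ (M - k) * z k
    have hT : T ∈ N ^ (2 * (M + 1)) := hreg.mem_pow_of_mul_mem <| by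
      simpa using sub_mem (Ideal.pow_le_pow_right (by omega) h) (hz (M + 1))
    obtain ⟨h0, hlt⟩ := hreg.coeff_mem_of_sum_pow_sub_mul_mem hz M hT
    refine ⟨h0, fun k hk => ?_⟩
    obtain hk | rfl := Nat.lt_succ_iff_lt_or_eq.mp hk
    · exact hlt k hk
    · have hle : 2 * (k + 1) + 1 ≤ 2 * (k + 1 + 1) := by omega
      simpa using sub_mem (Ideal.mem_sup_left (Ideal.pow_le_pow_right hle h))
        (Ideal.mem_sup_right (Ideal.mul_mem_mul (Ideal.mem_span_singleton_self f) hT))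

end Graded

section Localization

variable {R S : Type*} [CommRing R] [CommRing S] [Algebra R S] {f : R} [IsLocalization.Away f S]

theorem smul_invSelf_pow_mul_pow (x : R) (k : ℕ) :
    (x • invSelf (S := S) f ^ k) * algebraMap R S f ^ k = algebraMap R S x := by
  rw [Algebra.smul_def, mul_assoc, ← mul_pow, mul_comm (invSelf f), mul_invSelf, one_pow, mul_one]

theorem eq_smul_invSelf_pow {s : S} {k : ℕ} {x : R}
    (h : s * algebraMap R S f ^ k = algebraMap R S x) : s = x • invSelf f ^ k := by
  rw [Algebra.smul_def, ← h, mul_assoc, ← mul_pow, mul_invSelf, one_pow, mul_one]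

theorem linearCombination_invSelf_pow_mul_pow {c : ℕ →₀ R} {M : ℕ}
    (hc : c.support ⊆ range (M + 1)) :
    Finsupp.linearCombination R (fun k => invSelf (S := S) f ^ k) c * algebraMap R S f ^ M =
      algebraMap R S (∑ k ∈ range (M + 1), f ^ (M - k) * c k) := by
  rw [Finsupp.linearCombination_apply_of_mem_supported R (s := range (M + 1)) hc, sum_mul,
    map_sum]
  refine sum_congr rfl fun k hk => ?_
  rw [← pow_mul_pow_sub _ (Nat.lt_succ_iff.mp (mem_range.mp hk)), ← mul_assoc,
    smul_invSelf_pow_mul_pow, map_mul, map_pow, mul_comm]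

theorem IsGradedRegular.coeff_mem_of_linearCombination_eq_zero {N : Ideal R}
    (hreg : IsGradedRegular N f) {z : ℕ →₀ R} (hz : ∀ k, z k ∈ N ^ (2 * k))
    (h : Finsupp.linearCombination R (fun k => invSelf (S := S) f ^ k) z = 0) :
    z 0 ∈ N ∧ ∀ k, z (k + 1) ∈ gradedDenom N f (k + 1) := by
  obtain ⟨M, hM⟩ := z.support.exists_nat_subset_range
  have hcleared : algebraMap R S (∑ k ∈ range (M + 1), f ^ (M - k) * z k) = 0 := by
    rw [← linearCombination_invSelf_pow_mul_pow (hM.trans (range_subset_range.mpr M.le_succ)),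
      h, zero_mul]
  obtain ⟨⟨_, t, rfl⟩, ht⟩ :=
    (IsLocalization.map_eq_zero_iff (Submonoid.powers f) S _).mp hcleared
  obtain ⟨h0, hlt⟩ := hreg.coeff_mem_of_sum_pow_sub_mul_mem hz M
    (hreg.mem_pow_of_pow_mul_mem t (ht ▸ zero_mem _))
  refine ⟨h0, fun k => ?_⟩
  by_cases hk : k < M
  · exact hlt k hk
  · rw [Finsupp.notMem_support_iff.mp fun h => hk (Nat.lt_of_succ_lt (mem_range.mp (hM h)))]
    exact zero_mem _

end Localization

section Quotient

variable {R : Type*} [CommRing R] (N : Ideal R) (f : R)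

theorem ID_le_AD : ID N f ≤ AD N f :=
  Submodule.span_mono fun _ ⟨k, x, hx, hs⟩ =>
    ⟨k, x, Ideal.pow_le_pow_right (Nat.le_succ _) hx, hs⟩

theorem algebraMap_mem_AD (x : R) : algebraMap R (Localization.Away f) x ∈ AD N f :=
  Submodule.subset_span ⟨0, x, by simp, by simp⟩

theorem algebraMap_mem_ID {x : R} (hx : x ∈ N) :
    algebraMap R (Localization.Away f) x ∈ ID N f :=
  Submodule.subset_span ⟨0, x, by simpa using hx, by simp⟩

theorem smul_invSelf_pow_mem_AD {k : ℕ} {x : R} (hx : x ∈ N ^ (2 * k)) :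
    x • invSelf (S := Localization.Away f) f ^ k ∈ AD N f :=
  Submodule.subset_span ⟨k, x, hx, smul_invSelf_pow_mul_pow x k⟩

theorem smul_invSelf_pow_mem_ID {k : ℕ} {x : R} (hx : x ∈ N ^ (2 * k + 1)) :
    x • invSelf (S := Localization.Away f) f ^ k ∈ ID N f :=
  Submodule.subset_span ⟨k, x, hx, smul_invSelf_pow_mul_pow x k⟩

theorem smul_invSelf_pow_succ_mem_ID {k : ℕ} {x : R} (hx : x ∈ gradedDenom N f (k + 1)) :
    x • invSelf (S := Localization.Away f) f ^ (k + 1) ∈ ID N f := by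
  obtain ⟨y, hy, w, hw, rfl⟩ := Submodule.mem_sup.mp hx
  obtain ⟨z, hz, rfl⟩ := Ideal.mem_span_singleton_mul.mp hw
  rw [add_smul]
  refine add_mem (smul_invSelf_pow_mem_ID N f hy) ?_
  -- `(f * z) • f⁻¹ ^ (k + 1) = z • f⁻¹ ^ k`
  rw [mul_comm, mul_smul, pow_succ', ← smul_mul_assoc, Algebra.smul_def f, mul_invSelf, one_mul]
  exact smul_invSelf_pow_mem_ID N f (Ideal.pow_le_pow_right (by omega) hz)

theorem exists_finsupp_of_mem_ID {s : Localization.Away f} (hs : s ∈ ID N f) :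
    ∃ c : ℕ →₀ R, (∀ k, c k ∈ N ^ (2 * k + 1)) ∧
      Finsupp.linearCombination R (fun k => invSelf (S := Localization.Away f) f ^ k) c = s := by
  induction hs using Submodule.span_induction with
  | mem s hs =>
    obtain ⟨k, x, hx, hsx⟩ := hs
    refine ⟨Finsupp.single k x, fun j => ?_, ?_⟩
    · rcases eq_or_ne k j with rfl | hkj
      · simpa using hx
      · simp [hkj]
    · rw [Finsupp.linearCombination_single, eq_smul_invSelf_pow hsx]
  | zero => exact ⟨0, by simp, by simp⟩
  | add s t _ _ hs ht =>
    obtain ⟨c, hc, rfl⟩ := hs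
    obtain ⟨d, hd, rfl⟩ := ht
    exact ⟨c + d, fun k => add_mem (hc k) (hd k), map_add _ _ _⟩
  | smul r s _ hs =>
    obtain ⟨c, hc, rfl⟩ := hs
    exact ⟨r • c, fun k => Ideal.mul_mem_left _ r (hc k), map_smul _ _ _⟩

variable {N f}

theorem IsGradedRegular.coeff_mem_of_linearCombination_mem_ID (hreg : IsGradedRegular N f)
    {a : ℕ →₀ R} (ha : ∀ k, a k ∈ N ^ (2 * k))
    (h : Finsupp.linearCombination R (fun k => invSelf (S := Localization.Away f) f ^ k) a ∈
      ID N f) :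
    a 0 ∈ N ∧ ∀ k, a (k + 1) ∈ gradedDenom N f (k + 1) := by
  obtain ⟨c, hc, hca⟩ := exists_finsupp_of_mem_ID N f h
  obtain ⟨h0, hsucc⟩ := hreg.coeff_mem_of_linearCombination_eq_zero (S := Localization.Away f)
    (z := a - c) (fun k => sub_mem (ha k) (Ideal.pow_le_pow_right (by omega) (hc k)))
    (by rw [map_sub, hca, sub_self])
  have hc0 : c 0 ∈ N := by simpa using hc 0
  refine ⟨by simpa using add_mem h0 hc0, fun k => ?_⟩
  simpa using add_mem (hsucc k) (Ideal.mem_sup_left (hc (k + 1)))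

end Quotient

section Iso

variable {R : Type*} [CommRing R] (N : Ideal R) (f : R)

abbrev QuotAI := ↥(AD N f) ⧸ (ID N f).comap (AD N f).subtype

theorem QuotAI.mk_eq_zero_iff {s : Localization.Away f} (hs : s ∈ AD N f) :
    (Submodule.Quotient.mk ⟨s, hs⟩ : QuotAI N f) = 0 ↔ s ∈ ID N f :=
  Submodule.Quotient.mk_eq_zero _

noncomputable def ofGraded : (R ⧸ N) × (⨁ k, gradedPiece N f (k + 1)) →ₗ[R] QuotAI N f :=
  LinearMap.coprod
    (N.liftQ (((ID N f).comap (AD N f).subtype).mkQ ∘ₗ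
        (Algebra.linearMap R (Localization.Away f)).codRestrict (AD N f) (algebraMap_mem_AD N f))
      fun _ hx => (QuotAI.mk_eq_zero_iff N f _).2 (algebraMap_mem_ID N f hx))
    (DirectSum.toModule R ℕ _ fun k => Submodule.liftQ _
      (((ID N f).comap (AD N f).subtype).mkQ ∘ₗ
        (LinearMap.toSpanSingleton R _ (invSelf (S := Localization.Away f) f ^ (k + 1)) ∘ₗ
          (N ^ (2 * (k + 1))).subtype).codRestrict (AD N f)
          fun y => smul_invSelf_pow_mem_AD N f y.2)
      fun _ hy => (QuotAI.mk_eq_zero_iff N f _).2 (smul_invSelf_pow_succ_mem_ID N f hy))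

theorem ofGraded_mk_zero (x : R) :
    ofGraded N f (Ideal.Quotient.mk N x, 0) =
      Submodule.Quotient.mk ⟨algebraMap R _ x, algebraMap_mem_AD N f x⟩ := by
  rw [ofGraded, LinearMap.coprod_apply, map_zero, add_zero]
  rfl

theorem ofGraded_zero_of (k : ℕ) (y : ↥(N ^ (2 * (k + 1)))) :
    ofGraded N f (0, DirectSum.of (fun k => gradedPiece N f (k + 1)) k
      (Submodule.Quotient.mk y)) =
      Submodule.Quotient.mk
        ⟨(y : R) • invSelf f ^ (k + 1), smul_invSelf_pow_mem_AD N f y.2⟩ := by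
  rw [ofGraded, LinearMap.coprod_apply, map_zero, zero_add, ← DirectSum.lof_eq_of R,
    DirectSum.toModule_lof]
  rfl

theorem ofGraded_surjective : Function.Surjective (ofGraded N f) := by
  rw [← LinearMap.range_eq_top, eq_top_iff]
  rintro q -
  obtain ⟨⟨s, hs⟩, rfl⟩ := Submodule.Quotient.mk_surjective _ q
  induction hs using Submodule.span_induction with
  | mem s hs =>
    obtain ⟨k, x, hx, hsx⟩ := hs
    cases k with
    | zero =>
      refine ⟨(Ideal.Quotient.mk N x, 0), ?_⟩
      rw [ofGraded_mk_zero]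
      congr
      simpa using hsx.symm
    | succ k =>
      refine ⟨(0, DirectSum.of _ k (Submodule.Quotient.mk ⟨x, hx⟩)), ?_⟩
      rw [ofGraded_zero_of]
      congr
      exact (eq_smul_invSelf_pow hsx).symm
  | zero => exact zero_mem _
  | add s t _ _ hs ht => exact add_mem hs ht
  | smul r s _ hs => exact Submodule.smul_mem _ r hs

theorem ofGraded_mk_sum (r : R) (s : Finset ℕ) (y : ∀ k, ↥(N ^ (2 * (k + 1)))) :
    ofGraded N f (Ideal.Quotient.mk N r,
      ∑ k ∈ s, DirectSum.of (fun k => gradedPiece N f (k + 1)) k (Submodule.Quotient.mk (y k))) =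
      Submodule.Quotient.mk (⟨algebraMap R _ r, algebraMap_mem_AD N f r⟩ +
        ∑ k ∈ s, ⟨(y k : R) • invSelf f ^ (k + 1), smul_invSelf_pow_mem_AD N f (y k).2⟩) := by
  have hsplit : ((Ideal.Quotient.mk N r,
      ∑ k ∈ s, DirectSum.of (fun k => gradedPiece N f (k + 1)) k (Submodule.Quotient.mk (y k))) :
        (R ⧸ N) × (⨁ k, gradedPiece N f (k + 1))) =
      (Ideal.Quotient.mk N r, 0) + ∑ k ∈ s, (0, DirectSum.of _ k (Submodule.Quotient.mk (y k))) := by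
    ext <;> simp [Prod.fst_sum, Prod.snd_sum]
  rw [hsplit, map_add, map_sum, ofGraded_mk_zero]
  simp_rw [ofGraded_zero_of]
  rw [Submodule.Quotient.mk_add, ← Submodule.mkQ_apply _ (∑ _ ∈ _, _), map_sum]
  rfl

theorem IsGradedRegular.ofGraded_injective {N : Ideal R} {f : R} (hreg : IsGradedRegular N f) :
    Function.Injective (ofGraded N f) := by
  classical
  refine (injective_iff_map_eq_zero _).2 ?_
  rintro ⟨q, d⟩ hw
  obtain ⟨r, rfl⟩ := Ideal.Quotient.mk_surjective q
  choose y hy using fun k => Submodule.Quotient.mk_surjective _ (d k)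
  set a : ℕ →₀ R := Finsupp.single 0 r + ∑ k ∈ d.support, Finsupp.single (k + 1) (y k : R)
  have ha0 : a 0 = r := by simp [a]
  have hasucc : ∀ k, a (k + 1) = if k ∈ d.support then (y k : R) else 0 := by
    simp [a, Finsupp.single_apply]
  have heven : ∀ k, a k ∈ N ^ (2 * k)
    | 0 => by simp
    | k + 1 => by rw [hasucc]; split_ifs <;> simp [(y k).2]
  have hmem : Finsupp.linearCombination R (fun k => invSelf (S := Localization.Away f) f ^ k) a ∈
      ID N f := by
    rw [← DirectSum.sum_support_of d] at hw
    simp_rw [← hy] at hw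
    rw [ofGraded_mk_sum, Submodule.Quotient.mk_eq_zero] at hw
    convert hw using 1
    simp [a, map_add, map_sum, Finsupp.linearCombination_single, Algebra.algebraMap_eq_smul_one]
  obtain ⟨hr, hsucc⟩ := hreg.coeff_mem_of_linearCombination_mem_ID heven hmem
  refine Prod.ext (Ideal.Quotient.eq_zero_iff_mem.2 (ha0 ▸ hr)) (DFinsupp.ext fun k => ?_)
  by_cases hk : k ∈ d.support
  · rw [← hy k]
    refine (Submodule.Quotient.mk_eq_zero _).2 ?_
    simpa [hasucc, hk] using hsucc k
  · exact DFinsupp.notMem_support_iff.mp hk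

end Iso

theorem stmt_17 {R : Type*} [CommRing R] (N : Ideal R) (f : R)
    (hreg : ∀ (i : ℕ) (x : R), x ∈ N ^ i → f * x ∈ N ^ (i + 1) → x ∈ N ^ (i + 1)) :
    ID N f ≤ AD N f ∧
    ∃ e : (↥(AD N f) ⧸ (ID N f).comap (AD N f).subtype) ≃ₗ[R]
        (R ⧸ N) × ⨁ (k : ℕ), gradedPiece N f (k + 1),
      (∀ (x : R) (hx : algebraMap R (Localization.Away f) x ∈ AD N f),
        e (Submodule.Quotient.mk ⟨algebraMap R (Localization.Away f) x, hx⟩) =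
          (Ideal.Quotient.mk N x, 0)) ∧
      (∀ (k : ℕ) (x : R) (hx : x ∈ N ^ (2 * (k + 1))) (s : Localization.Away f)
          (hs : s * (algebraMap R (Localization.Away f) f) ^ (k + 1) =
            algebraMap R (Localization.Away f) x)
          (hsA : s ∈ AD N f),
        e (Submodule.Quotient.mk ⟨s, hsA⟩) =
          (0, DirectSum.of (fun k => gradedPiece N f (k + 1)) k
            (Submodule.Quotient.mk ⟨x, hx⟩))) := by
  let e := LinearEquiv.ofBijective (ofGraded N f)
    ⟨IsGradedRegular.ofGraded_injective hreg, ofGraded_surjective N f⟩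
  refine ⟨ID_le_AD N f, e.symm, fun x hx => ?_, fun k x hx s hs hsA => ?_⟩
  · rw [LinearEquiv.symm_apply_eq]
    exact (ofGraded_mk_zero N f x).symm
  · obtain rfl := eq_smul_invSelf_pow hs
    rw [LinearEquiv.symm_apply_eq]
    exact (ofGraded_zero_of N f k ⟨x, hx⟩).symm
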